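/- arXiv:2111.03303 — 2 statements merged into one kernel-verified Lean document; each statement's English description precedes it below -/
import Mathlib

section
/- Let V = O(-1) ⊕ O(-2) ⊕ O(-3) on P^1, let ζ be the tautological class on P(V) and F a fiber of P(V) → P^1. Then ζ·F^2 = 0, ζ·(ζ+3F)^2 = 0, and ζ·F·(ζ+3F) = 1; in particular ζ is generically nef although V is not nef. -/
/-- The intersection theory of `X = P(O(-1) ⊕ O(-2) ⊕ O(-3))` over `P¹`,
modelled by a commutative ℝ-algebra `A` (the real Chow/cohomology ring of `X`) with
classes `z = ζ` (the tautological class) and `f` (a fiber), a degree map `degr` on top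
classes, the relations `f² = 0` and the Grothendieck relation `z³ = c₁(V)·z²·f = -6 z² f`,
and the normalisation `degr (z² f) = 1`.  The nef cone of `X` is generated by `f` and
`z + 3f`.  Then `ζ·F² = 0`, `ζ·(ζ+3F)² = 0`, `ζ·F·(ζ+3F) = 1`; in particular `ζ` is
generically nef (non-negative on products of two nef classes) although `V` is not nef
(`ζ` itself is not in the nef cone). -/
theorem statement1 (A : Type*) [CommRing A] [Algebra ℝ A] (degr : A →ₗ[ℝ] ℝ)
    (z f : A)
    (hf2 : f ^ 2 = 0)
    (hgroth : z ^ 3 = -(6 * (z ^ 2 * f)))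
    (hnorm : degr (z ^ 2 * f) = 1)
    (NefCone : Set A)
    (hcone : NefCone = {a | ∃ s t : ℝ, 0 ≤ s ∧ 0 ≤ t ∧ a = s • f + t • (z + 3 * f)}) :
    degr (z * f ^ 2) = 0 ∧
    degr (z * (z + 3 * f) ^ 2) = 0 ∧
    degr (z * f * (z + 3 * f)) = 1 ∧
    (∀ a b, a ∈ NefCone → b ∈ NefCone → 0 ≤ degr (z * a * b)) ∧
    z ∉ NefCone := by
  have h1 : z * f ^ 2 = 0 := by rw [hf2]; ring
  have h2 : z * (z + 3 * f) ^ 2 = 0 := by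
    have : z * (z + 3 * f) ^ 2 = z ^ 3 + 6 * (z ^ 2 * f) + 9 * (z * f ^ 2) := by ring
    rw [this, hgroth, h1]; ring
  have h3 : z * f * (z + 3 * f) = z ^ 2 * f := by
    have : z * f * (z + 3 * f) = z ^ 2 * f + 3 * (z * f ^ 2) := by ring
    rw [this, h1]; ring
  refine ⟨by rw [h1, map_zero], by rw [h2, map_zero], by rw [h3, hnorm], ?_, ?_⟩
  · intro a b ha hb
    rw [hcone] at ha hb
    obtain ⟨s, t, hs, ht, rfl⟩ := ha
    obtain ⟨s', t', hs', ht', rfl⟩ := hb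
    have key : z * (s • f + t • (z + 3 * f)) * (s' • f + t' • (z + 3 * f))
        = (s * t' + t * s') • (z ^ 2 * f) := by
      have expand : z * (s • f + t • (z + 3 * f)) * (s' • f + t' • (z + 3 * f))
          = (s * s') • (z * f ^ 2) + (s * t' + t * s') • (z * f * (z + 3 * f))
            + (t * t') • (z * (z + 3 * f) ^ 2) := by
        simp only [Algebra.smul_def, map_mul, map_add]
        ring
      rw [expand, h1, h2, h3, smul_zero, smul_zero, zero_add, add_zero]
    rw [key, map_smul, hnorm, smul_eq_mul, mul_one]
    positivity
  · rw [hcone]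
    rintro ⟨s, t, hs, ht, hz⟩
    have e1 : degr (z * f * z) = t := by
      have h' : z * f * z = z * f * (s • f + t • (z + 3 * f)) := by rw [← hz]
      rw [h']
      have h'' : z * f * (s • f + t • (z + 3 * f))
          = s • (z * f ^ 2) + t • (z * f * (z + 3 * f)) := by
        simp only [Algebra.smul_def, map_mul, map_add]
        ring
      rw [h'', map_add, map_smul, map_smul, h1, h3, map_zero, hnorm]
      simp
    have e1' : degr (z * f * z) = 1 := by
      have h' : z * f * z = z ^ 2 * f := by ring
      rw [h', hnorm]
    have ht1 : t = 1 := by rw [← e1, e1']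
    have e2 : degr (z * (z + 3 * f) * z) = s := by
      have hz' : z * (z + 3 * f) * z = z * (z + 3 * f) * (s • f + t • (z + 3 * f)) := by
        rw [← hz]
      rw [hz']
      have h'' : z * (z + 3 * f) * (s • f + t • (z + 3 * f))
          = s • (z * f * (z + 3 * f)) + t • (z * (z + 3 * f) ^ 2) := by
        simp only [Algebra.smul_def, map_mul, map_add]
        ring
      rw [h'', map_add, map_smul, map_smul, h2, h3, map_zero, hnorm]
      simp
    have e2' : degr (z * (z + 3 * f) * z) = -3 := by
      have h' : z * (z + 3 * f) * z = z ^ 3 + 3 * (z ^ 2 * f) := by ring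
      rw [h', hgroth]
      have h'' : -(6 * (z ^ 2 * f)) + 3 * (z ^ 2 * f) = ((-3 : ℝ)) • (z ^ 2 * f) := by
        rw [Algebra.smul_def, map_neg, map_ofNat]
        ring
      rw [h'', map_smul, hnorm]
      simp
    rw [e2'] at e2
    linarith
end

section
/- Let M be a projective K3 surface with Picard number 1 and ample generator H with H² = d. Let a > 0 be the unique real number such that ζ + a·π*H is nef but not ample on P(T_M), where ζ is the tautological class. Then ζ·(ζ + a·π*H)² = −24 + a²d, and this is negative; hence ζ is not generically nef. -/
/-- Let `M` be a projective K3 surface with Picard number 1 and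
ample generator `H` with `H² = d` (so `d ≥ 2`).  The intersection theory of
`P(T_M)` is modelled by a commutative ℝ-algebra `A` with classes `z = ζ` (the
tautological class) and `h = π*H`, and a degree map `degr`, subject to
`deg ζ³ = −24`, `deg (ζ²·π*H) = 0`, `deg (ζ·(π*H)²) = d` (coming from `c₁(M) = 0`,
`c₂(M) = 24`).  Let `a > 0` be the unique real number such that `ζ + a·π*H` is nef
but not ample; by Gounelas–Ottem, `a²d < 24` if `d > 2` and `a = 3` if `d = 2`.
Since `ζ + a·π*H` is nef, generic nefness of `ζ` would force
`deg (ζ·(ζ + a·π*H)²) ≥ 0`.  Then `deg (ζ·(ζ + a·π*H)²) = −24 + a²d < 0`; hence `ζ`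
is not generically nef. -/
theorem statement14 (A : Type*) [CommRing A] [Algebra ℝ A] (degr : A →ₗ[ℝ] ℝ)
    (z h : A) (d : ℝ) (hd : 2 ≤ d)
    (hz3 : degr (z ^ 3) = -24)
    (hz2h : degr (z ^ 2 * h) = 0)
    (hzh2 : degr (z * h ^ 2) = d)
    (a : ℝ) (ha : 0 < a)
    -- Gounelas–Ottem: `a²d < 24` for `d > 2`, and `a = 3` for `d = 2`
    (hGO : (2 < d → a ^ 2 * d < 24) ∧ (d = 2 → a = 3))
    -- `ζ` generically nef -/
    (GenericallyNef : A → Prop)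
    -- since `ζ + a·π*H` is nef, generic nefness of `ζ` implies
    -- `ζ·(ζ + a·π*H)² ≥ 0`
    (hgn : GenericallyNef z → 0 ≤ degr (z * (z + a • h) ^ 2)) :
    degr (z * (z + a • h) ^ 2) = -24 + a ^ 2 * d ∧
    degr (z * (z + a • h) ^ 2) < 0 ∧
    ¬ GenericallyNef z := by
  have hexp : z * (z + a • h) ^ 2
      = z ^ 3 + (2 * a) • (z ^ 2 * h) + (a ^ 2) • (z * h ^ 2) := by
    simp only [Algebra.smul_def, map_mul, map_pow, map_ofNat]
    ring
  have hval : degr (z * (z + a • h) ^ 2) = -24 + a ^ 2 * d := by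
    rw [hexp]
    simp [hz3, hz2h, hzh2]
  have hlt : a ^ 2 * d < 24 := by
    rcases lt_or_eq_of_le hd with h2 | h2
    · exact hGO.1 h2
    · rw [hGO.2 h2.symm, ← h2]; norm_num
  have hneg : degr (z * (z + a • h) ^ 2) < 0 := by rw [hval]; linarith
  exact ⟨hval, hneg, fun hg => absurd (hgn hg) (not_le.mpr hneg)⟩
end
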